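/- Let d ≥ 2 be an integer, 0 < q < 1, let c : [0,∞) → ℝ be continuous, positive and non-decreasing, and let ψ : [0,∞) → ℝ be twice differentiable with ψ''(θ) = c(θ)·ψ(θ) for θ > 0, ψ(0) = 0, ψ'(0) = 1. Let λ > (d−1)(1−q)/q and set p = (d−1)(1−q)/(λq) ∈ (0,1). There exists a constant C > 0, depending only on λ, q, c and d, such that for all Borel measurable functions f, g : ℝ^d → [0,∞] with g(x) ≤ (ψ(‖x‖)/‖x‖)^{d−1} for almost every x ≠ 0, one has ∫_{ℝ^d} f(x)^q g(x) dx ≤ C · (∫_{ℝ^d} f(x) g(x) dx)^{(1−p)q} · (∫_{ℝ^d} ψ(‖x‖)^λ f(x) g(x) dx)^{pq}, where all integrals are with respect to Lebesgue measure on ℝ^d and take values in [0,∞]. -/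

import Mathlib

/-!
Split the space at the sphere `‖x‖ = R`. Inside, Hölder's inequality with exponents `1/q`,
`1/(1-q)` bounds `∫ f^q g` by `(∫ f g)^q (∫_{‖x‖ ≤ R} g)^(1-q)`; outside, inserting the weight
`ψ^λ` bounds it by `(∫ ψ^λ f g)^q (∫_{‖x‖ > R} ψ^(-λq/(1-q)) g)^(1-q)`. In polar coordinates the
bound on `g` turns both `g`-integrals into integrals of powers `ψ(r)^s` over `(0, R]` and
`(R, ∞)`. Monotonicity of `c` makes the energy `ψ'² - c(0) ψ²` nondecreasing, so
`ψ' ≥ √c(0) ψ`, and then `ψ^s / (s √c(0))` is an antiderivative dominating `ψ^s`: the two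
integrals are `O(ψ(R)^(d-1))` and `O(ψ(R)^(d-1-λq/(1-q)))`. As `ψ` maps `(0, ∞)` onto `(0, ∞)`,
`R` can be chosen to balance the two terms, which yields the exponents `(1-p)q` and `pq`.
-/

open Real Filter Set MeasureTheory
open scoped ENNReal Topology

structure IsJacobiSolution (c ψ ψ' : ℝ → ℝ) : Prop where
  hasDerivAt : ∀ θ ≥ (0:ℝ), HasDerivAt ψ (ψ' θ) θ
  hasDerivAt_deriv : ∀ θ > (0:ℝ), HasDerivAt ψ' (c θ * ψ θ) θ
  apply_zero : ψ 0 = 0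
  deriv_zero : ψ' 0 = 1

namespace IsJacobiSolution

variable {c ψ ψ' : ℝ → ℝ} (h : IsJacobiSolution c ψ ψ')
include h

theorem continuousOn : ContinuousOn ψ (Ici 0) := fun θ hθ =>
  (h.hasDerivAt θ hθ).continuousAt.continuousWithinAt

theorem exists_deriv_eq_div {r : ℝ} (hr : 0 < r) : ∃ ξ ∈ Ioo 0 r, ψ' ξ = ψ r / r := by
  obtain ⟨ξ, hξ, hslope⟩ := exists_hasDerivAt_eq_slope ψ ψ' hr
    (h.continuousOn.mono Icc_subset_Ici_self) fun θ hθ => h.hasDerivAt θ hθ.1.le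
  exact ⟨ξ, hξ, by rwa [h.apply_zero, sub_zero, sub_zero] at hslope⟩

theorem tendsto_div_self : Tendsto (fun s => ψ s / s) (𝓝[>] 0) (𝓝 1) := by
  have := (h.deriv_zero ▸ h.hasDerivAt 0 le_rfl).tendsto_slope_zero_right
  simpa [h.apply_zero, div_eq_inv_mul] using this

variable (hc : ∀ θ ≥ (0:ℝ), 0 < c θ)
include hc

theorem deriv_le_deriv {x y : ℝ} (hx : 0 < x) (hxy : x ≤ y) (hψ : ∀ s ∈ Ioo x y, 0 ≤ ψ s) :
    ψ' x ≤ ψ' y := by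
  have hderiv : ∀ s, x ≤ s → HasDerivAt ψ' (c s * ψ s) s := fun s hs =>
    h.hasDerivAt_deriv s (hx.trans_le hs)
  refine monotoneOn_of_hasDerivWithinAt_nonneg (f' := fun s => c s * ψ s) (convex_Icc x y)
    (fun s hs => (hderiv s hs.1).continuousAt.continuousWithinAt)
    (fun s hs => ?_) (fun s hs => ?_) ⟨le_rfl, hxy⟩ ⟨hxy, le_rfl⟩ hxy
  all_goals rw [interior_Icc] at hs
  · exact (hderiv s hs.1.le).hasDerivWithinAt
  · exact mul_nonneg (hc s (hx.trans hs.1).le).le (hψ s hs)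

theorem one_le_deriv_of_forall_pos {x : ℝ} (hx : 0 < x) (hψ : ∀ s ∈ Ioo 0 x, 0 < ψ s) :
    1 ≤ ψ' x := by
  refine le_of_forall_pos_le_add fun ε hε => ?_
  obtain ⟨s, hs, hsx⟩ := ((h.tendsto_div_self.eventually
    (Ioi_mem_nhds (by linarith : 1 - ε < 1))).and (Ioo_mem_nhdsGT hx)).exists
  obtain ⟨ξ, hξ, hξs⟩ := h.exists_deriv_eq_div hsx.1
  have : ψ' ξ ≤ ψ' x := h.deriv_le_deriv hc hξ.1 (hξ.2.trans hsx.2).le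
    fun t ht => (hψ t ⟨hξ.1.trans ht.1, ht.2⟩).le
  have hs : 1 - ε < ψ s / s := hs
  linarith

theorem pos {r : ℝ} (hr : 0 < r) : 0 < ψ r := by
  by_contra! hψr
  obtain ⟨u, hu, hψu⟩ := mem_nhdsGT_iff_exists_Ioc_subset.1
    (h.tendsto_div_self.eventually (Ioi_mem_nhds one_pos))
  have hpos_near : ∀ s ∈ Ioc 0 u, 0 < ψ s := fun s hs =>
    (div_pos_iff_of_pos_right hs.1).1 (hψu hs)
  have hur : u < r := lt_of_not_ge fun hru => (hpos_near r ⟨hr, hru⟩).not_ge hψr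
  -- The least zero `m` of `ψ` beyond `u`: `ψ > 0` on `(0, m)` forces `ψ' ≥ 1` there, so `ψ m ≥ m`.
  set Z := Icc u r ∩ ψ ⁻¹' Iic 0
  have hZ : IsCompact Z := isCompact_Icc.of_isClosed_subset
    ((h.continuousOn.mono fun s hs => hu.le.trans hs.1).preimage_isClosed_of_isClosed
      isClosed_Icc isClosed_Iic) inter_subset_left
  obtain ⟨m, ⟨hm, hψm⟩, hmin⟩ := hZ.exists_isLeast ⟨r, ⟨hur.le, le_rfl⟩, hψr⟩
  have hm0 : 0 < m := hu.trans_le hm.1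
  have hpos_below : ∀ s ∈ Ioo 0 m, 0 < ψ s := by
    intro s hs
    rcases le_or_gt s u with hsu | hus
    · exact hpos_near s ⟨hs.1, hsu⟩
    · by_contra! hψs
      exact (hmin ⟨⟨hus.le, hs.2.le.trans hm.2⟩, hψs⟩).not_gt hs.2
  obtain ⟨ξ, hξ, hξm⟩ := h.exists_deriv_eq_div hm0
  have := h.one_le_deriv_of_forall_pos hc hξ.1 fun s hs => hpos_below s ⟨hs.1, hs.2.trans hξ.2⟩
  rw [hξm, le_div_iff₀ hm0] at this
  have hψm : ψ m ≤ 0 := hψm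
  linarith

theorem one_le_deriv {r : ℝ} (hr : 0 < r) : 1 ≤ ψ' r :=
  h.one_le_deriv_of_forall_pos hc hr fun _ hs => h.pos hc hs.1

theorem self_le {r : ℝ} (hr : 0 ≤ r) : r ≤ ψ r := by
  rcases hr.eq_or_lt with rfl | hr
  · exact h.apply_zero.ge
  obtain ⟨ξ, hξ, hξr⟩ := h.exists_deriv_eq_div hr
  have := h.one_le_deriv hc hξ.1
  rwa [hξr, le_div_iff₀ hr, one_mul] at this

theorem tendsto_atTop : Tendsto ψ atTop atTop :=
  tendsto_atTop_mono' atTop ((eventually_ge_atTop 0).mono fun _ hr => h.self_le hc hr) tendsto_id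

theorem exists_pos_eq {t : ℝ} (ht : 0 < t) : ∃ R > 0, ψ R = t := by
  obtain ⟨R, hR, hψR⟩ := intermediate_value_Icc ht.le (h.continuousOn.mono Icc_subset_Ici_self)
    ⟨h.apply_zero.trans_le ht.le, h.self_le hc ht.le⟩
  refine ⟨R, hR.1.lt_of_ne ?_, hψR⟩
  rintro rfl
  exact ht.ne (h.apply_zero ▸ hψR)

/-- The energy `ψ'² - c 0 * ψ²` has derivative `2 ψ ψ' (c - c 0) ≥ 0` and is positive near `0`. -/
theorem sqrt_mul_le_deriv (hmono : MonotoneOn c (Ici 0)) {r : ℝ} (hr : 0 < r) :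
    √(c 0) * ψ r ≤ ψ' r := by
  set E : ℝ → ℝ := fun s => ψ' s ^ 2 - c 0 * ψ s ^ 2
  have hE : ∀ s > (0:ℝ), HasDerivAt E (2 * ψ s * ψ' s * (c s - c 0)) s := fun s hs => by
    refine (((h.hasDerivAt_deriv s hs).fun_pow 2).fun_sub
      (((h.hasDerivAt s hs.le).fun_pow 2).const_mul (c 0))).congr_deriv ?_
    push_cast; ring
  have hEmono : MonotoneOn E (Ioi 0) := by
    refine monotoneOn_of_hasDerivWithinAt_nonneg
      (f' := fun s => 2 * ψ s * ψ' s * (c s - c 0)) (convex_Ioi 0)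
      (fun s hs => (hE s hs).continuousAt.continuousWithinAt) (fun s hs => ?_) (fun s hs => ?_)
    all_goals rw [interior_Ioi] at hs
    · exact (hE s hs).hasDerivWithinAt
    · have := sub_nonneg.2 (hmono (le_refl (0:ℝ)) hs.out.le hs.out.le)
      have := h.one_le_deriv hc hs
      have := h.pos hc hs
      positivity
  have hψ0 : Tendsto (fun s => c 0 * ψ s ^ 2) (𝓝[>] 0) (𝓝 0) := by
    have := ((h.hasDerivAt 0 le_rfl).continuousAt.tendsto.pow 2).const_mul (c 0)
    simpa [h.apply_zero] using this.mono_left nhdsWithin_le_nhds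
  obtain ⟨s, hs, hsr⟩ := ((hψ0.eventually (Iio_mem_nhds one_pos)).and (Ioc_mem_nhdsGT hr)).exists
  have hEs : 0 < E s := by
    have := h.one_le_deriv hc hsr.1
    have hs : c 0 * ψ s ^ 2 < 1 := hs
    simp only [E]; nlinarith
  have hEr : 0 ≤ E r := (hEs.trans_le (hEmono hsr.1 hr hsr.2)).le
  have hψ'r : 0 ≤ ψ' r := zero_le_one.trans (h.one_le_deriv hc hr)
  calc √(c 0) * ψ r = √(c 0 * ψ r ^ 2) := by
        rw [Real.sqrt_mul (hc 0 le_rfl).le, Real.sqrt_sq (h.pos hc hr).le]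
    _ ≤ √(ψ' r ^ 2) := Real.sqrt_le_sqrt (by simp only [E] at hEr; linarith)
    _ = ψ' r := Real.sqrt_sq hψ'r

end IsJacobiSolution

theorem lintegral_Ioc_ofReal_deriv_eq_sub {Φ Φ' : ℝ → ℝ} {a b : ℝ} (hab : a ≤ b)
    (hcont : ContinuousOn Φ (Icc a b)) (hderiv : ∀ x ∈ Ioo a b, HasDerivAt Φ (Φ' x) x)
    (hnonneg : ∀ x ∈ Ioo a b, 0 ≤ Φ' x) :
    ∫⁻ x in Ioc a b, ENNReal.ofReal (Φ' x) = ENNReal.ofReal (Φ b - Φ a) := by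
  have hint := intervalIntegral.integrableOn_deriv_of_nonneg hcont hderiv hnonneg
  rw [← ofReal_integral_eq_lintegral_ofReal hint, ← intervalIntegral.integral_of_le hab,
    intervalIntegral.integral_eq_sub_of_hasDerivAt_of_le hab hcont hderiv
      ((intervalIntegrable_iff_integrableOn_Ioc_of_le hab).2 hint)]
  rw [Filter.EventuallyLE, Measure.restrict_congr_set Ioo_ae_eq_Ioc.symm]
  exact (ae_restrict_mem measurableSet_Ioo).mono hnonneg

theorem lintegral_Ioi_ofReal_deriv_eq_sub {Φ Φ' : ℝ → ℝ} {a l : ℝ}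
    (hcont : ContinuousWithinAt Φ (Ici a) a) (hderiv : ∀ x ∈ Ioi a, HasDerivAt Φ (Φ' x) x)
    (hnonneg : ∀ x ∈ Ioi a, 0 ≤ Φ' x) (hlim : Tendsto Φ atTop (𝓝 l)) :
    ∫⁻ x in Ioi a, ENNReal.ofReal (Φ' x) = ENNReal.ofReal (l - Φ a) := by
  rw [← ofReal_integral_eq_lintegral_ofReal
      (integrableOn_Ioi_deriv_of_nonneg hcont hderiv hnonneg hlim)
      ((ae_restrict_mem measurableSet_Ioi).mono hnonneg),
    integral_Ioi_of_hasDerivAt_of_nonneg hcont hderiv hnonneg hlim]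

section GrowthBounds

variable {ψ ψ' : ℝ → ℝ} {κ : ℝ}

theorem rpow_le_rpow_sub_one_mul_deriv_div {r s : ℝ} (hψ : 0 < ψ r) (hκ : 0 < κ)
    (hle : κ * ψ r ≤ ψ' r) : ψ r ^ s ≤ ψ r ^ (s - 1) * ψ' r / κ := by
  rw [le_div_iff₀ hκ]
  calc ψ r ^ s * κ = ψ r ^ (s - 1) * (κ * ψ r) := by
        rw [mul_left_comm, ← rpow_add_one hψ.ne', sub_add_cancel, mul_comm]
    _ ≤ ψ r ^ (s - 1) * ψ' r := by gcongr

theorem hasDerivAt_rpow_div {r s : ℝ} (hs : s ≠ 0) (hκ : κ ≠ 0) (hψ : 0 < ψ r)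
    (hderiv : HasDerivAt ψ (ψ' r) r) :
    HasDerivAt (fun x => ψ x ^ s / (s * κ)) (ψ r ^ (s - 1) * ψ' r / κ) r := by
  refine ((hderiv.rpow_const (Or.inl hψ.ne')).div_const (s * κ)).congr_deriv ?_
  field_simp

variable (hψ : ∀ r ≥ (0:ℝ), HasDerivAt ψ (ψ' r) r) (hpos : ∀ r > (0:ℝ), 0 < ψ r) (hκ : 0 < κ)
  (hle : ∀ r > (0:ℝ), κ * ψ r ≤ ψ' r)
include hψ hpos hκ hle

theorem lintegral_Ioc_rpow_le (hψ0 : ψ 0 = 0) {s R : ℝ} (hs : 0 < s) (hR : 0 ≤ R) :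
    ∫⁻ r in Ioc 0 R, ENNReal.ofReal (ψ r ^ s) ≤ ENNReal.ofReal (ψ R ^ s / (s * κ)) := by
  have hcont : ContinuousOn (fun x => ψ x ^ s / (s * κ)) (Icc 0 R) := fun x hx =>
    (((hψ x hx.1).continuousAt.rpow_const (Or.inr hs.le)).div_const _).continuousWithinAt
  have hFTC := lintegral_Ioc_ofReal_deriv_eq_sub hR hcont
    (fun x hx => hasDerivAt_rpow_div hs.ne' hκ.ne' (hpos x hx.1) (hψ x hx.1.le))
    fun x hx => (rpow_nonneg (hpos x hx.1).le s).trans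
      (rpow_le_rpow_sub_one_mul_deriv_div (hpos x hx.1) hκ (hle x hx.1))
  rw [hψ0, zero_rpow hs.ne', zero_div, sub_zero] at hFTC
  rw [← hFTC, Measure.restrict_congr_set Ioo_ae_eq_Ioc.symm]
  refine setLIntegral_mono' measurableSet_Ioo fun x hx => ENNReal.ofReal_le_ofReal ?_
  exact rpow_le_rpow_sub_one_mul_deriv_div (hpos x hx.1) hκ (hle x hx.1)

theorem lintegral_Ioi_rpow_le (hψ_top : Tendsto ψ atTop atTop) {s R : ℝ} (hs : s < 0)
    (hR : 0 < R) :
    ∫⁻ r in Ioi R, ENNReal.ofReal (ψ r ^ s) ≤ ENNReal.ofReal (ψ R ^ s / (-s * κ)) := by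
  have hderiv : ∀ x ∈ Ici R, HasDerivAt (fun x => ψ x ^ s / (s * κ)) (ψ x ^ (s - 1) * ψ' x / κ) x :=
    fun x hx => hasDerivAt_rpow_div hs.ne hκ.ne' (hpos x (hR.trans_le hx)) (hψ x (hR.le.trans hx))
  have hlim : Tendsto (fun x => ψ x ^ s / (s * κ)) atTop (𝓝 0) := by
    simpa using ((tendsto_rpow_neg_atTop (neg_pos.2 hs)).comp hψ_top).div_const (s * κ)
  have hFTC := lintegral_Ioi_ofReal_deriv_eq_sub
    (hderiv R self_mem_Ici).continuousAt.continuousWithinAt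
    (fun x hx => hderiv x (mem_Ici.2 (le_of_lt hx)))
    (fun x hx => (rpow_nonneg (hpos x (hR.trans hx)).le s).trans
      (rpow_le_rpow_sub_one_mul_deriv_div (hpos x (hR.trans hx)) hκ (hle x (hR.trans hx)))) hlim
  rw [zero_sub, ← div_neg, ← neg_mul] at hFTC
  rw [← hFTC]
  refine setLIntegral_mono' measurableSet_Ioi fun x hx => ENNReal.ofReal_le_ofReal ?_
  exact rpow_le_rpow_sub_one_mul_deriv_div (hpos x (hR.trans hx)) hκ (hle x (hR.trans hx))

end GrowthBounds

theorem rpow_balance {a b q α β : ℝ} (ha : 0 < a) (hb : 0 < b) (hq1 : q < 1)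
    (hαβ : α + β ≠ 0) (t : ℝ) (ht : t = (b / a) ^ (q / ((α + β) * (1 - q)))) :
    a ^ q * (t ^ α) ^ (1 - q) = a ^ ((1 - α / (α + β)) * q) * b ^ (α / (α + β) * q) ∧
      b ^ q * (t ^ (-β)) ^ (1 - q) = a ^ ((1 - α / (α + β)) * q) * b ^ (α / (α + β) * q) := by
  have hq : 1 - q ≠ 0 := by linarith
  subst ht
  simp only [rpow_def_of_pos ha, rpow_def_of_pos hb, rpow_def_of_pos (div_pos hb ha),
    rpow_def_of_pos (exp_pos _), log_exp, ← exp_add, log_div hb.ne' ha.ne', exp_eq_exp]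
  constructor <;> field_simp <;> ring

theorem ENNReal.le_mul_rpow_mul_rpow_of_forall_le_add {L A B D₁ D₂ : ℝ≥0∞} {q α β : ℝ}
    (hq0 : 0 < q) (hq1 : q < 1) (hα : 0 < α) (hβ : 0 < β) (hD₁ : D₁ ≠ 0)
    (hA : A = 0 → L = 0) (hB : B = 0 → L = 0)
    (hsplit : ∀ t : ℝ, 0 < t → L ≤ A ^ q * (D₁ * ENNReal.ofReal (t ^ α)) ^ (1 - q) +
      B ^ q * (D₂ * ENNReal.ofReal (t ^ (-β))) ^ (1 - q)) :
    L ≤ (D₁ ^ (1 - q) + D₂ ^ (1 - q)) * A ^ ((1 - α / (α + β)) * q) * B ^ (α / (α + β) * q) := by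
  set p := α / (α + β)
  have hp0 : 0 < p := by positivity
  have hp1 : p < 1 := (div_lt_one (by positivity)).2 (by linarith)
  have hD : D₁ ^ (1 - q) + D₂ ^ (1 - q) ≠ 0 := (add_pos_of_pos_of_nonneg
    (ENNReal.rpow_pos_of_nonneg (pos_iff_ne_zero.2 hD₁) (by linarith)) zero_le).ne'
  rcases eq_or_ne A 0 with hA0 | hA0
  · simp [hA hA0]
  rcases eq_or_ne B 0 with hB0 | hB0
  · simp [hB hB0]
  rcases eq_or_ne A ⊤ with hAtop | hAtop
  · rw [hAtop, ENNReal.top_rpow_of_pos (by nlinarith), ENNReal.mul_top hD, ENNReal.top_mul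
      (ENNReal.rpow_pos_of_nonneg (pos_iff_ne_zero.2 hB0) (by positivity)).ne']
    exact le_top
  rcases eq_or_ne B ⊤ with hBtop | hBtop
  · rw [hBtop, ENNReal.top_rpow_of_pos (by positivity), ENNReal.mul_top (mul_ne_zero hD
      (ENNReal.rpow_pos_of_nonneg (pos_iff_ne_zero.2 hA0) (by nlinarith)).ne')]
    exact le_top
  have ha : 0 < A.toReal := ENNReal.toReal_pos hA0 hAtop
  have hb : 0 < B.toReal := ENNReal.toReal_pos hB0 hBtop
  set t := (B.toReal / A.toReal) ^ (q / ((α + β) * (1 - q)))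
  have ht : 0 < t := by positivity
  obtain ⟨hbal₁, hbal₂⟩ := rpow_balance ha hb hq1 (by positivity) t rfl
  refine (hsplit t ht).trans_eq ?_
  rw [← ENNReal.ofReal_toReal hAtop, ← ENNReal.ofReal_toReal hBtop]
  simp only [ENNReal.mul_rpow_of_nonneg _ _ (sub_nonneg.2 hq1.le), ENNReal.ofReal_rpow_of_pos ha,
    ENNReal.ofReal_rpow_of_pos hb, ENNReal.ofReal_rpow_of_pos (rpow_pos_of_pos ht _)]
  rw [mul_left_comm, ← ENNReal.ofReal_mul (by positivity), hbal₁, mul_left_comm (ENNReal.ofReal _),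
    ← ENNReal.ofReal_mul (by positivity), hbal₂, mul_assoc, ENNReal.ofReal_mul (by positivity),
    add_mul]

theorem lintegral_rpow_mul_le_weighted {α : Type*} [MeasurableSpace α] {ν : Measure α}
    {f g w : α → ℝ≥0∞} (hf : AEMeasurable f ν) (hg : AEMeasurable g ν) (hw : AEMeasurable w ν)
    (hw0 : ∀ᵐ x ∂ν, w x ≠ 0) (hwtop : ∀ᵐ x ∂ν, w x ≠ ⊤) {q : ℝ} (hq0 : 0 ≤ q) (hq1 : q < 1) :
    ∫⁻ x, f x ^ q * g x ∂ν ≤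
      (∫⁻ x, w x * f x * g x ∂ν) ^ q * (∫⁻ x, w x ^ (-(q / (1 - q))) * g x ∂ν) ^ (1 - q) := by
  have hq : 1 - q ≠ 0 := by linarith
  refine le_of_eq_of_le (lintegral_congr_ae ?_) (ENNReal.lintegral_mul_norm_pow_le
    ((hw.mul hf).mul hg) ((hw.pow_const _).mul hg) hq0 (by linarith) (add_sub_cancel q 1))
  filter_upwards [hw0, hwtop] with x hx0 hxtop
  simp only [Pi.mul_apply]
  rw [ENNReal.mul_rpow_of_nonneg _ _ hq0, ENNReal.mul_rpow_of_nonneg _ _ hq0,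
    ENNReal.mul_rpow_of_nonneg _ _ (by linarith), ← ENNReal.rpow_mul, neg_mul, div_mul_cancel₀ _ hq]
  calc f x ^ q * g x = (w x ^ q * w x ^ (-q)) * f x ^ q * (g x ^ q * g x ^ (1 - q)) := by
        rw [← ENNReal.rpow_add _ _ hx0 hxtop, ← ENNReal.rpow_add_of_nonneg _ _ hq0 (by linarith)]
        simp
    _ = _ := by ring

theorem lintegral_rpow_mul_eq_zero_of_weighted {α : Type*} [MeasurableSpace α] {ν : Measure α}
    {f g w : α → ℝ≥0∞} (hf : AEMeasurable f ν) (hg : AEMeasurable g ν) (hw : AEMeasurable w ν)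
    (hw0 : ∀ᵐ x ∂ν, w x ≠ 0) (hwtop : ∀ᵐ x ∂ν, w x ≠ ⊤) {q : ℝ} (hq0 : 0 < q) (hq1 : q < 1)
    (h : ∫⁻ x, w x * f x * g x ∂ν = 0) : ∫⁻ x, f x ^ q * g x ∂ν = 0 :=
  nonpos_iff_eq_zero.1 <| (lintegral_rpow_mul_le_weighted hf hg hw hw0 hwtop hq0.le hq1).trans_eq
    (by rw [h, ENNReal.zero_rpow_of_pos hq0, zero_mul])

theorem IsJacobiSolution.measurable_norm {E : Type*} [NormedAddCommGroup E] [MeasurableSpace E]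
    [OpensMeasurableSpace E] {c ψ ψ' : ℝ → ℝ} (hJ : IsJacobiSolution c ψ ψ') :
    Measurable fun x : E => ψ ‖x‖ :=
  (hJ.continuousOn.comp_continuous continuous_norm fun x => norm_nonneg x).measurable

section RadialIntegrals

variable {E : Type*} [NormedAddCommGroup E] [NormedSpace ℝ E] [MeasurableSpace E] [BorelSpace E]
  [FiniteDimensional ℝ E] [Nontrivial E] (μ : Measure E) [μ.IsAddHaarMeasure]

local notation "dim" => Module.finrank ℝ

theorem lintegral_fun_norm_addHaar {F : ℝ → ℝ≥0∞} (hF : Measurable F) :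
    ∫⁻ x, F ‖x‖ ∂μ =
      μ.toSphere univ * ∫⁻ r in Ioi 0, ENNReal.ofReal (r ^ (dim E - 1)) * F r := by
  calc ∫⁻ x, F ‖x‖ ∂μ = ∫⁻ x : ({(0:E)}ᶜ : Set E), F ‖x.1‖ ∂(μ.comap Subtype.val) := by
        rw [lintegral_subtype_comap (measurableSet_singleton _).compl fun x => F ‖x‖,
          restrict_compl_singleton]
    _ = ∫⁻ y : Metric.sphere (0:E) 1 × Ioi (0:ℝ), F y.2
          ∂(μ.toSphere.prod (.volumeIoiPow (dim E - 1))) := by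
        rw [← μ.measurePreserving_homeomorphUnitSphereProd.lintegral_comp_emb
          (Homeomorph.measurableEmbedding _) (fun y => F y.2.1)]
        simp only [homeomorphUnitSphereProd_apply_snd_coe]
    _ = μ.toSphere univ * ∫⁻ r : Ioi (0:ℝ), F r ∂(.volumeIoiPow (dim E - 1)) := by
        rw [lintegral_prod (fun y : Metric.sphere (0:E) 1 × Ioi (0:ℝ) => F y.2)
          (hF.comp (measurable_subtype_coe.comp measurable_snd)).aemeasurable]
        simp only [lintegral_const, mul_comm]
    _ = _ := by
        congr 1
        rw [Measure.volumeIoiPow, lintegral_withDensity_eq_lintegral_mul _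
          (f := fun r : Ioi (0:ℝ) => ENNReal.ofReal (r.1 ^ (dim E - 1)))
          (measurable_subtype_coe.pow_const _).ennreal_ofReal
          (g := fun r : Ioi (0:ℝ) => F r.1) (hF.comp measurable_subtype_coe),
          ← lintegral_subtype_comap measurableSet_Ioi
            fun r => ENNReal.ofReal (r ^ (dim E - 1)) * F r]
        rfl

theorem setLIntegral_rpow_norm_mul_le {ψ : ℝ → ℝ} (hψ : ContinuousOn ψ (Ici 0))
    (hpos : ∀ r > (0:ℝ), 0 < ψ r) {g : E → ℝ≥0∞}
    (hg : ∀ᵐ x ∂μ, x ≠ 0 → g x ≤ ENNReal.ofReal ((ψ ‖x‖ / ‖x‖) ^ (dim E - 1)))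
    (s : ℝ) {S : Set ℝ} (hS : MeasurableSet S) :
    ∫⁻ x in (‖·‖) ⁻¹' S, ENNReal.ofReal (ψ ‖x‖) ^ s * g x ∂μ ≤
      μ.toSphere univ *
        ∫⁻ r in S ∩ Ioi 0, ENNReal.ofReal (ψ r ^ (s + (dim E - 1 : ℕ))) := by
  set n := dim E - 1
  -- `ψ ∘ |·|` is a globally continuous, hence measurable, extension of `ψ` on `[0, ∞)`.
  have hψabs : Continuous fun r : ℝ => ψ |r| :=
    hψ.comp_continuous continuous_abs fun r => abs_nonneg r
  set F : ℝ → ℝ≥0∞ :=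
    S.indicator fun r => ENNReal.ofReal (ψ |r|) ^ s * ENNReal.ofReal ((ψ |r| / r) ^ n)
  have hF : Measurable F :=
    ((hψabs.measurable.ennreal_ofReal.pow_const s).mul
      ((hψabs.measurable.div measurable_id).pow_const n).ennreal_ofReal).indicator hS
  calc ∫⁻ x in (‖·‖) ⁻¹' S, ENNReal.ofReal (ψ ‖x‖) ^ s * g x ∂μ ≤ ∫⁻ x, F ‖x‖ ∂μ := by
        rw [← lintegral_indicator (hS.preimage measurable_norm)]
        refine lintegral_mono_ae ?_
        filter_upwards [hg, μ.ae_ne 0] with x hgx hx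
        by_cases hxS : ‖x‖ ∈ S
        · simp only [F, indicator_of_mem hxS, indicator_of_mem (show x ∈ (‖·‖) ⁻¹' S from hxS),
            abs_norm]
          gcongr
          exact hgx hx
        · simp [F, hxS]
    _ = μ.toSphere univ * ∫⁻ r in Ioi 0, ENNReal.ofReal (r ^ n) * F r :=
        lintegral_fun_norm_addHaar μ hF
    _ = _ := by
        congr 1
        rw [← Measure.restrict_restrict hS, ← lintegral_indicator hS]
        refine setLIntegral_congr_fun measurableSet_Ioi fun r (hr : 0 < r) => ?_
        by_cases hrS : r ∈ S
        · have hψr := hpos r hr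
          simp only [F, indicator_of_mem hrS, abs_of_pos hr]
          rw [ENNReal.ofReal_rpow_of_pos hψr, ← ENNReal.ofReal_mul (by positivity),
            ← ENNReal.ofReal_mul (by positivity), rpow_add hψr, rpow_natCast, div_pow]
          congr 1
          field_simp
        · simp [F, hrS]

section Splitting

variable {c ψ ψ' : ℝ → ℝ} (hJ : IsJacobiSolution c ψ ψ') (hc : ∀ θ ≥ (0:ℝ), 0 < c θ)
  (hmono : MonotoneOn c (Ici 0)) {f g : E → ℝ≥0∞} (hf : Measurable f) (hg : Measurable g)
  (hgψ : ∀ᵐ x ∂μ, x ≠ 0 → g x ≤ ENNReal.ofReal ((ψ ‖x‖ / ‖x‖) ^ (dim E - 1)))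
  {q : ℝ} (hq0 : 0 < q) (hq1 : q < 1)
include hJ hc hmono hf hg hgψ hq0 hq1

theorem setLIntegral_norm_le_rpow_mul_le (hn : 2 ≤ dim E) {R : ℝ} (hR : 0 < R) :
    ∫⁻ x in (‖·‖) ⁻¹' Iic R, f x ^ q * g x ∂μ ≤ (∫⁻ x, f x * g x ∂μ) ^ q *
      (μ.toSphere univ * ENNReal.ofReal (ψ R ^ ((dim E - 1 : ℕ) : ℝ) /
        ((dim E - 1 : ℕ) * √(c 0)))) ^ (1 - q) := by
  have hHolder := lintegral_rpow_mul_le_weighted (ν := μ.restrict ((‖·‖) ⁻¹' Iic R)) (w := 1)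
    hf.aemeasurable hg.aemeasurable aemeasurable_const (by simp) (by simp) hq0.le hq1
  simp only [Pi.one_apply, one_mul, ENNReal.one_rpow] at hHolder
  refine hHolder.trans (mul_le_mul' (ENNReal.rpow_le_rpow (setLIntegral_le_lintegral _ _) hq0.le)
    (ENNReal.rpow_le_rpow ?_ (by linarith)))
  have hradial := setLIntegral_rpow_norm_mul_le μ hJ.continuousOn (fun r => hJ.pos hc) hgψ 0
    measurableSet_Iic (S := Iic R)
  simp only [ENNReal.rpow_zero, one_mul, zero_add, Iic_inter_Ioi] at hradial
  refine hradial.trans ?_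
  gcongr
  exact lintegral_Ioc_rpow_le hJ.hasDerivAt (fun r => hJ.pos hc) (sqrt_pos.2 (hc 0 le_rfl))
    (fun r => hJ.sqrt_mul_le_deriv hc hmono) hJ.apply_zero (by norm_num; omega) hR.le

theorem setLIntegral_norm_gt_rpow_mul_le {lam : ℝ} (hlam : 0 < lam)
    (hlamn : ((dim E - 1 : ℕ) : ℝ) < lam * (q / (1 - q))) {R : ℝ} (hR : 0 < R) :
    ∫⁻ x in (‖·‖) ⁻¹' Ioi R, f x ^ q * g x ∂μ ≤
      (∫⁻ x, ENNReal.ofReal (ψ ‖x‖ ^ lam) * f x * g x ∂μ) ^ q *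
      (μ.toSphere univ * ENNReal.ofReal (ψ R ^ ((dim E - 1 : ℕ) - lam * (q / (1 - q))) /
        ((lam * (q / (1 - q)) - (dim E - 1 : ℕ)) * √(c 0)))) ^ (1 - q) := by
  have hHolder := lintegral_rpow_mul_le_weighted (ν := μ.restrict ((‖·‖) ⁻¹' Ioi R))
    (w := fun x => ENNReal.ofReal (ψ ‖x‖ ^ lam)) hf.aemeasurable hg.aemeasurable
    ((hJ.measurable_norm.pow_const lam).ennreal_ofReal.aemeasurable)
    ((ae_restrict_mem (measurableSet_Ioi.preimage measurable_norm)).mono fun x (hx : R < ‖x‖) =>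
      ENNReal.ofReal_pos.2 (rpow_pos_of_pos (hJ.pos hc (hR.trans hx)) _) |>.ne')
    (ae_of_all _ fun x => ENNReal.ofReal_ne_top) hq0.le hq1
  refine hHolder.trans (mul_le_mul' (ENNReal.rpow_le_rpow (setLIntegral_le_lintegral _ _) hq0.le)
    (ENNReal.rpow_le_rpow ?_ (by linarith)))
  have hweight : ∀ x : E, ENNReal.ofReal (ψ ‖x‖ ^ lam) ^ (-(q / (1 - q))) =
      ENNReal.ofReal (ψ ‖x‖) ^ (lam * -(q / (1 - q))) := fun x => by
    rw [← ENNReal.ofReal_rpow_of_nonneg ((norm_nonneg x).trans (hJ.self_le hc (norm_nonneg x)))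
      hlam.le, ← ENNReal.rpow_mul]
  simp only [hweight]
  have hradial := setLIntegral_rpow_norm_mul_le μ hJ.continuousOn (fun r => hJ.pos hc) hgψ
    (lam * -(q / (1 - q))) measurableSet_Ioi (S := Ioi R)
  rw [Ioi_inter_Ioi, max_eq_left hR.le] at hradial
  refine hradial.trans ?_
  gcongr
  refine (lintegral_Ioi_rpow_le hJ.hasDerivAt (fun r => hJ.pos hc) (sqrt_pos.2 (hc 0 le_rfl))
    (fun r => hJ.sqrt_mul_le_deriv hc hmono) (hJ.tendsto_atTop hc)
    (s := lam * -(q / (1 - q)) + (dim E - 1 : ℕ)) (by linarith) hR).trans_eq ?_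
  ring_nf

theorem lintegral_rpow_mul_le_add (hn : 2 ≤ dim E) {lam : ℝ} (hlam : 0 < lam)
    (hlamn : ((dim E - 1 : ℕ) : ℝ) < lam * (q / (1 - q))) {R : ℝ} (hR : 0 < R) :
    ∫⁻ x, f x ^ q * g x ∂μ ≤
      (∫⁻ x, f x * g x ∂μ) ^ q *
        (μ.toSphere univ * ENNReal.ofReal (ψ R ^ ((dim E - 1 : ℕ) : ℝ) /
          ((dim E - 1 : ℕ) * √(c 0)))) ^ (1 - q) +
      (∫⁻ x, ENNReal.ofReal (ψ ‖x‖ ^ lam) * f x * g x ∂μ) ^ q *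
        (μ.toSphere univ * ENNReal.ofReal (ψ R ^ ((dim E - 1 : ℕ) - lam * (q / (1 - q))) /
          ((lam * (q / (1 - q)) - (dim E - 1 : ℕ)) * √(c 0)))) ^ (1 - q) := by
  rw [← lintegral_add_compl _ (measurableSet_Iic.preimage measurable_norm), ← preimage_compl,
    compl_Iic]
  exact add_le_add (setLIntegral_norm_le_rpow_mul_le μ hJ hc hmono hf hg hgψ hq0 hq1 hn hR)
    (setLIntegral_norm_gt_rpow_mul_le μ hJ hc hmono hf hg hgψ hq0 hq1 hlam hlamn hR)

end Splitting

theorem lintegral_rpow_mul_le_of_isJacobiSolution {c ψ ψ' : ℝ → ℝ} (hJ : IsJacobiSolution c ψ ψ')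
    (hc : ∀ θ ≥ (0:ℝ), 0 < c θ) (hmono : MonotoneOn c (Ici 0)) (hn : 2 ≤ dim E)
    {q : ℝ} (hq0 : 0 < q) (hq1 : q < 1) {lam : ℝ}
    (hlam : ((dim E : ℝ) - 1) * (1 - q) / q < lam)
    {p : ℝ} (hp : p = ((dim E : ℝ) - 1) * (1 - q) / (lam * q)) :
    ∃ C : ℝ, 0 < C ∧ ∀ f g : E → ℝ≥0∞, Measurable f → Measurable g →
      (∀ᵐ x ∂μ, x ≠ 0 → g x ≤ ENNReal.ofReal ((ψ ‖x‖ / ‖x‖) ^ (dim E - 1))) →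
      ∫⁻ x, f x ^ q * g x ∂μ ≤ ENNReal.ofReal C * (∫⁻ x, f x * g x ∂μ) ^ ((1 - p) * q) *
        (∫⁻ x, ENNReal.ofReal (ψ ‖x‖ ^ lam) * f x * g x ∂μ) ^ (p * q) := by
  set n := dim E - 1
  have hn_cast : (n : ℝ) = (dim E : ℝ) - 1 := by
    rw [Nat.cast_sub (by omega), Nat.cast_one]
  have hn0 : (0 : ℝ) < n := by
    rw [hn_cast, sub_pos, Nat.one_lt_cast]
    omega
  have hlam0 : 0 < lam := lt_of_le_of_lt (by rw [← hn_cast]; positivity) hlam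
  have hnK : (n : ℝ) < lam * (q / (1 - q)) := by
    rw [← hn_cast, div_lt_iff₀ hq0] at hlam
    rw [mul_div_assoc', lt_div_iff₀ (by linarith)]
    linarith
  have hκ : 0 < √(c 0) := sqrt_pos.2 (hc 0 le_rfl)
  set ω := μ.toSphere univ
  have hω : ω ≠ 0 := Measure.measure_univ_ne_zero.2 μ.toSphere_ne_zero
  set D₁ := ω * ENNReal.ofReal ((n * √(c 0))⁻¹)
  set D₂ := ω * ENNReal.ofReal (((lam * (q / (1 - q)) - n) * √(c 0))⁻¹)
  have hD₁ : D₁ ≠ 0 := mul_ne_zero hω (ENNReal.ofReal_pos.2 (by positivity)).ne'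
  have hD : D₁ ^ (1 - q) + D₂ ^ (1 - q) ≠ ⊤ := ENNReal.add_ne_top.2
    ⟨ENNReal.rpow_ne_top_of_nonneg (by linarith) (ENNReal.mul_ne_top (measure_ne_top _ _)
      ENNReal.ofReal_ne_top), ENNReal.rpow_ne_top_of_nonneg (by linarith)
      (ENNReal.mul_ne_top (measure_ne_top _ _) ENNReal.ofReal_ne_top)⟩
  refine ⟨(D₁ ^ (1 - q) + D₂ ^ (1 - q)).toReal, ENNReal.toReal_pos ?_ hD,
    fun f g hf hg hgψ => ?_⟩
  · exact (add_pos_of_pos_of_nonneg (ENNReal.rpow_pos_of_nonneg (pos_iff_ne_zero.2 hD₁)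
      (by linarith)) zero_le).ne'
  have hp' : p = n / (n + (lam * (q / (1 - q)) - n)) := by
    rw [hp, ← hn_cast, add_sub_cancel]
    field_simp
  rw [ENNReal.ofReal_toReal hD, hp']
  refine ENNReal.le_mul_rpow_mul_rpow_of_forall_le_add hq0 hq1 hn0 (sub_pos.2 hnK) hD₁
    (lintegral_rpow_mul_eq_zero_of_weighted (w := 1) hf.aemeasurable hg.aemeasurable
      aemeasurable_const (by simp) (by simp) hq0 hq1 <| by simpa using ·)
    (lintegral_rpow_mul_eq_zero_of_weighted hf.aemeasurable hg.aemeasurable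
      (hJ.measurable_norm.pow_const lam).ennreal_ofReal.aemeasurable
      ((μ.ae_ne 0).mono fun x hx =>
        (ENNReal.ofReal_pos.2 (rpow_pos_of_pos (hJ.pos hc (norm_pos_iff.2 hx)) _)).ne')
      (ae_of_all _ fun _ => ENNReal.ofReal_ne_top) hq0 hq1) fun t ht => ?_
  obtain ⟨R, hR, rfl⟩ := hJ.exists_pos_eq hc ht
  refine (lintegral_rpow_mul_le_add μ hJ hc hmono hf hg hgψ hq0 hq1 hn hlam0 hnK hR).trans_eq ?_
  rw [div_eq_inv_mul, ENNReal.ofReal_mul (by positivity), ← mul_assoc, div_eq_inv_mul,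
    ENNReal.ofReal_mul (inv_nonneg.2 (mul_pos (sub_pos.2 hnK) hκ).le), ← mul_assoc, neg_sub]

end RadialIntegrals

theorem stmt5_general (d : ℕ) (hd : 2 ≤ d) (q : ℝ) (hq0 : 0 < q) (hq1 : q < 1)
    (c ψ ψ' : ℝ → ℝ)
    (hc_pos : ∀ θ ≥ (0:ℝ), 0 < c θ)
    (hc_mono : MonotoneOn c (Set.Ici 0))
    (hψ : ∀ θ ≥ (0:ℝ), HasDerivAt ψ (ψ' θ) θ)
    (hψ'' : ∀ θ > (0:ℝ), HasDerivAt ψ' (c θ * ψ θ) θ)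
    (hψ0 : ψ 0 = 0) (hψ'0 : ψ' 0 = 1)
    (lam : ℝ) (hlam : ((d:ℝ) - 1) * (1 - q) / q < lam)
    (p : ℝ) (hp : p = ((d:ℝ) - 1) * (1 - q) / (lam * q)) :
    ∃ C : ℝ, 0 < C ∧
      ∀ f g : EuclideanSpace ℝ (Fin d) → ℝ≥0∞, Measurable f → Measurable g →
      (∀ᵐ x : EuclideanSpace ℝ (Fin d), x ≠ 0 →
        g x ≤ ENNReal.ofReal ((ψ ‖x‖ / ‖x‖) ^ (d - 1))) →
      ∫⁻ x, f x ^ q * g x ≤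
        ENNReal.ofReal C * (∫⁻ x, f x * g x) ^ ((1 - p) * q) *
          (∫⁻ x, ENNReal.ofReal (ψ ‖x‖ ^ lam) * f x * g x) ^ (p * q) := by
  have hdim : Module.finrank ℝ (EuclideanSpace ℝ (Fin d)) = d := finrank_euclideanSpace_fin
  have : Nontrivial (EuclideanSpace ℝ (Fin d)) :=
    Module.nontrivial_of_finrank_pos (R := ℝ) (by omega)
  have h := lintegral_rpow_mul_le_of_isJacobiSolution volume ⟨hψ, hψ'', hψ0, hψ'0⟩ hc_pos hc_mono
    (hdim.symm ▸ hd) hq0 hq1 (by rwa [hdim]) (p := p) (by rwa [hdim])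
  rwa [hdim] at h

/-- Lemma 6.2 (generalized Carlson–Levin inequality, unbounded curvature), in geodesic
normal coordinates: `ψ` solves `ψ'' = c ψ`, `ψ(0)=0`, `ψ'(0)=1`, `g` is the normalized
Jacobian of the exponential map, bounded by `(ψ(‖x‖)/‖x‖)^{d-1}`. -/
theorem stmt5 (d : ℕ) (hd : 2 ≤ d) (q : ℝ) (hq0 : 0 < q) (hq1 : q < 1)
    (c ψ ψ' : ℝ → ℝ)
    (hc_cont : ContinuousOn c (Set.Ici 0))
    (hc_pos : ∀ θ ≥ (0:ℝ), 0 < c θ)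
    (hc_mono : MonotoneOn c (Set.Ici 0))
    (hψ : ∀ θ ≥ (0:ℝ), HasDerivAt ψ (ψ' θ) θ)
    (hψ'' : ∀ θ > (0:ℝ), HasDerivAt ψ' (c θ * ψ θ) θ)
    (hψ0 : ψ 0 = 0) (hψ'0 : ψ' 0 = 1)
    (lam : ℝ) (hlam : ((d:ℝ) - 1) * (1 - q) / q < lam)
    (p : ℝ) (hp : p = ((d:ℝ) - 1) * (1 - q) / (lam * q)) :
    ∃ C : ℝ, 0 < C ∧
      ∀ f g : EuclideanSpace ℝ (Fin d) → ℝ≥0∞, Measurable f → Measurable g →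
      (∀ᵐ x : EuclideanSpace ℝ (Fin d), x ≠ 0 →
        g x ≤ ENNReal.ofReal ((ψ ‖x‖ / ‖x‖) ^ (d - 1))) →
      ∫⁻ x, f x ^ q * g x ≤
        ENNReal.ofReal C * (∫⁻ x, f x * g x) ^ ((1 - p) * q) *
          (∫⁻ x, ENNReal.ofReal (ψ ‖x‖ ^ lam) * f x * g x) ^ (p * q) :=
  stmt5_general d hd q hq0 hq1 c ψ ψ' hc_pos hc_mono hψ hψ'' hψ0 hψ'0 lam hlam p hp
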